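/- arXiv:2106.00301 — 2 statements merged into one kernel-verified Lean document; each statement's English description precedes it below -/
import Mathlib

section
/- Let S ⊆ {1,…,n} and let S₁, S₂ ⊆ S. Then S₁ ▷ S₂ if and only if (S \ S₂) ▷ (S \ S₁). -/
open Finset

/-- `S₁` dominates `S₂`: there is an injection `f : S₂ → S₁` with `f i ≤ i`. -/
def Dominates {n : ℕ} (S₁ S₂ : Finset (Fin n)) : Prop :=
  ∃ f : Fin n → Fin n, Set.InjOn f (S₂ : Set (Fin n)) ∧ ∀ i ∈ S₂, f i ∈ S₁ ∧ f i ≤ i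

/-- Columns of `A` are componentwise non-increasing. -/
def ColsOrdered {m n : ℕ} (A : Fin m → Fin n → ℕ) : Prop :=
  ∀ j : Fin m, ∀ i i' : Fin n, i ≤ i' → A j i' ≤ A j i

/-- `S` is a cover for the multiple knapsack set given by `A, b`. -/
def IsCover {m n : ℕ} (A : Fin m → Fin n → ℕ) (b : Fin m → ℕ) (S : Finset (Fin n)) : Prop :=
  ∃ j : Fin m, b j < ∑ i ∈ S, A j i

/-- Minimal cover: a cover none of whose proper subsets is a cover. -/
def IsMinimalCover {m n : ℕ} (A : Fin m → Fin n → ℕ) (b : Fin m → ℕ)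
    (S : Finset (Fin n)) : Prop :=
  IsCover A b S ∧ ∀ S' ⊂ S, ¬ IsCover A b S'

/-- The union `C = ∪ₕ Cₕ`. -/
def unionC {n k : ℕ} (C : Fin k → Finset (Fin n)) : Finset (Fin n) :=
  Finset.univ.sup C

/-- The intersection `C₀ = ∩ₕ Cₕ`. -/
def interC {n k : ℕ} (C : Fin k → Finset (Fin n)) : Finset (Fin n) :=
  Finset.univ.inf C

/-- `{C₁,…,C_k}` is a multi-cover for the TOMKS given by `A, b`. -/
def MultiCover {m n k : ℕ} (A : Fin m → Fin n → ℕ) (b : Fin m → ℕ)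
    (C : Fin k → Finset (Fin n)) : Prop :=
  (∀ h, IsCover A b (C h)) ∧
  ∀ T ⊆ unionC C \ interC C, (∀ h, T ≠ C h \ interC C) →
    ∃ h, Dominates T (C h \ interC C) ∨ Dominates (C h \ interC C) T

/-- Max of `g` over `S`, with the empty maximum taken to be `0`. -/
def fmax {ι : Type*} (S : Finset ι) (g : ι → ℤ) : ℤ :=
  if h : S.Nonempty then S.sup' h g else 0

/-- Min of `g` over `S`, with the empty minimum taken to be `0`. -/
def fmin {ι : Type*} (S : Finset ι) (g : ι → ℤ) : ℤ :=
  if h : S.Nonempty then S.inf' h g else 0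

/-- `α` is an MCI coefficient vector for the family of covers `C`. -/
def IsMCICoeff {n k : ℕ} (C : Fin k → Finset (Fin n)) (α : Fin n → ℤ) : Prop :=
  (∀ i, i ∉ unionC C → α i = 0) ∧
  (∀ i ∈ unionC C \ interC C, (∀ j ∈ unionC C \ interC C, j ≤ i) → α i = 1) ∧
  (∀ i ∈ unionC C \ interC C, (∃ j ∈ unionC C \ interC C, i < j) →
    ∀ h : Fin k, i ∈ C h →
      1 + fmax ((unionC C \ C h).filter (fun ℓ => i < ℓ)) α ≤ α i) ∧
  (∀ j ∈ interC C, ∃ h : Fin k,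
    max (fmax ((unionC C \ C h).filter (fun ℓ => ℓ < j)) α)
        (1 + ∑ ℓ ∈ (unionC C \ C h).filter (fun ℓ => j < ℓ), α ℓ) ≤ α j)

/-- `α` is the S-MCI coefficient vector for the family of covers `C`. -/
def IsSMCICoeff {n k : ℕ} (C : Fin k → Finset (Fin n)) (α : Fin n → ℤ) : Prop :=
  (∀ i, i ∉ unionC C → α i = 0) ∧
  (∀ i ∈ unionC C \ interC C,
    α i = 1 + fmax (Finset.univ.filter (fun h : Fin k => i ∈ C h))
        (fun h => fmax ((unionC C \ C h).filter (fun ℓ => i < ℓ)) α)) ∧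
  (∀ j ∈ interC C,
    α j = fmin (Finset.univ : Finset (Fin k))
        (fun h => max (fmax ((unionC C \ C h).filter (fun ℓ => ℓ < j)) α)
            (1 + ∑ ℓ ∈ (unionC C \ C h).filter (fun ℓ => j < ℓ), α ℓ)))

/-- Second-smallest value of the multiset `{α i : i ∈ D}` (for `|D| ≥ 2`). -/
def secondMin {n : ℕ} (α : Fin n → ℤ) (D : Finset (Fin n)) : ℤ :=
  fmax D (fun j => fmin (D.erase j) α)

/-- `πᵀ x ≤ 1` is a non-trivial facet-defining inequality for `conv(K)`. -/
def IsNontrivialFacet {m n : ℕ} (A : Fin m → Fin n → ℕ) (b : Fin m → ℕ)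
    (pv : Fin n → ℝ) : Prop :=
  (∀ i, 0 ≤ pv i) ∧
  (∃ i j : Fin n, i ≠ j ∧ pv i ≠ 0 ∧ pv j ≠ 0) ∧
  (∀ x : Fin n → ℝ, (∀ i, x i = 0 ∨ x i = 1) →
    (∀ j, ∑ i, (A j i : ℝ) * x i ≤ (b j : ℝ)) → ∑ i, pv i * x i ≤ 1) ∧
  (∃ pts : Fin n → (Fin n → ℝ), AffineIndependent ℝ pts ∧
    ∀ ℓ, (∀ i, pts ℓ i = 0 ∨ pts ℓ i = 1) ∧
      (∀ j, ∑ i, (A j i : ℝ) * pts ℓ i ≤ (b j : ℝ)) ∧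
      ∑ i, pv i * pts ℓ i = 1)

/-- `S` is a cover for the single knapsack set given by `a, b`. -/
def IsCoverK {n : ℕ} (a : Fin n → ℕ) (b : ℕ) (S : Finset (Fin n)) : Prop :=
  b < ∑ i ∈ S, a i

/-- Minimal cover for a single knapsack set. -/
def IsMinimalCoverK {n : ℕ} (a : Fin n → ℕ) (b : ℕ) (S : Finset (Fin n)) : Prop :=
  IsCoverK a b S ∧ ∀ S' ⊂ S, ¬ IsCoverK a b S'


lemma dominates_iff_count {n : ℕ} (S₁ S₂ : Finset (Fin n)) :
    Dominates S₁ S₂ ↔ ∀ i : Fin n,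
      (S₂.filter (· ≤ i)).card ≤ (S₁.filter (· ≤ i)).card := by
  constructor
  · rintro ⟨f, hinj, hf⟩ i
    apply Finset.card_le_card_of_injOn f
    · intro x hx
      simp only [Finset.mem_coe, Finset.mem_filter] at hx ⊢
      exact ⟨(hf x hx.1).1, le_trans (hf x hx.1).2 hx.2⟩
    · exact hinj.mono (by intro x hx; exact (Finset.mem_filter.1 hx).1)
  · intro hcnt
    classical
    set t : {x // x ∈ S₂} → Finset (Fin n) := fun x => S₁.filter (· ≤ (x : Fin n)) with ht
    have hall : ∀ A : Finset {x // x ∈ S₂}, A.card ≤ (A.biUnion t).card := by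
      intro A
      rcases A.eq_empty_or_nonempty with rfl | hA
      · simp
      · obtain ⟨M, hM, hMmax⟩ := A.exists_max_image (fun x => (x : Fin n)) hA
        calc A.card = (A.image Subtype.val).card :=
              (Finset.card_image_of_injective _ Subtype.val_injective).symm
          _ ≤ (S₂.filter (· ≤ (M : Fin n))).card := by
              apply Finset.card_le_card
              intro y hy
              obtain ⟨x, hx, rfl⟩ := Finset.mem_image.1 hy
              exact Finset.mem_filter.2 ⟨x.2, hMmax x hx⟩
          _ ≤ (S₁.filter (· ≤ (M : Fin n))).card := hcnt _
          _ ≤ (A.biUnion t).card := by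
              apply Finset.card_le_card
              intro y hy
              exact Finset.mem_biUnion.2 ⟨M, hM, hy⟩
    obtain ⟨f₀, hf₀inj, hf₀⟩ :=
      (Finset.all_card_le_biUnion_card_iff_exists_injective t).1 hall
    refine ⟨fun x => if h : x ∈ S₂ then f₀ ⟨x, h⟩ else x, ?_, ?_⟩
    · intro x hx y hy hxy
      simp only [Finset.mem_coe] at hx hy
      simp only [dif_pos hx, dif_pos hy] at hxy
      exact Subtype.ext_iff.1 (hf₀inj hxy)
    · intro x hx
      simp only [dif_pos hx]
      have h2 := hf₀ ⟨x, hx⟩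
      rw [ht] at h2
      simp only [Finset.mem_filter] at h2
      exact h2

/-- for `S₁, S₂ ⊆ S`, `S₁ ▷ S₂ ↔ (S \ S₂) ▷ (S \ S₁)`. -/
theorem dominates_compl_iff {n : ℕ} (S S₁ S₂ : Finset (Fin n))
    (h₁ : S₁ ⊆ S) (h₂ : S₂ ⊆ S) :
    Dominates S₁ S₂ ↔ Dominates (S \ S₂) (S \ S₁) := by
  rw [dominates_iff_count, dominates_iff_count]
  have key : ∀ (T : Finset (Fin n)), T ⊆ S → ∀ i : Fin n,
      ((S \ T).filter (· ≤ i)).card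
        = (S.filter (· ≤ i)).card - (T.filter (· ≤ i)).card := by
    intro T hT i
    have hs : (S \ T).filter (· ≤ i) = S.filter (· ≤ i) \ T.filter (· ≤ i) := by
      ext x
      simp only [Finset.mem_filter, Finset.mem_sdiff]
      tauto
    rw [hs, Finset.card_sdiff_of_subset (Finset.filter_subset_filter _ hT)]
  have hle : ∀ (T : Finset (Fin n)), T ⊆ S → ∀ i : Fin n,
      (T.filter (· ≤ i)).card ≤ (S.filter (· ≤ i)).card := by
    intro T hT i
    exact Finset.card_le_card (Finset.filter_subset_filter _ hT)
  constructor
  · intro h i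
    rw [key S₁ h₁ i, key S₂ h₂ i]
    have := h i; have := hle S₁ h₁ i; have := hle S₂ h₂ i
    omega
  · intro h i
    have hk := h i
    rw [key S₁ h₁ i, key S₂ h₂ i] at hk
    have := hle S₁ h₁ i; have := hle S₂ h₂ i
    omega
end

section
/- Let K = {x ∈ {0,1}^n : Ax ≤ b} be a TOMKS, let {C₁,…,C_k} be a multi-cover for K with |C_h| ≥ 2 for every h, let α ∈ ℤ^n be an MCI coefficient vector for {C₁,…,C_k}, and set β := max_{h∈{1,…,k}} α(C_h) − 1. Then the extended MCI Σ_{i∈{1,…,n}\C} ( max{α_{2,C_h} : h ∈ {1,…,k}, i < min(C_h)} ) x_i + Σ_{i=1}^n α_i x_i ≤ β, where a maximum over an empty index set is taken to be 0, is valid for K: every x ∈ {0,1}^n with Ax ≤ b satisfies it. -/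
open Finset

/-!
Let `S` be the support of a feasible `x`. An element `i ∈ S` outside `C` is removed by an exchange:
if some `C h` lies wholly above `i`, then, `C h` being a cover and the columns of `A` being
non-increasing, at least two elements of `C h` are missing from `S`, and exchanging `i` for one of
weight at least `α_{2,C_h}` keeps `S` feasible without lowering the left-hand side. Inside `C`,
a missing element `j ∈ C₀` is exchanged for a smaller element of `S` outside the `C h` given by
the last MCI condition; if there is none, the tail condition at `j` bounds `α(S)` directly.
Once `C₀ ⊆ S ⊆ C`, the multi-cover property compares `S \ C₀` with some `C h \ C₀`: if `S \ C₀`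
dominates, `S` is a cover; if it is dominated, discarding the common elements leaves a domination
of `S \ C h` by `C h \ S`, and the third MCI condition makes each dominated weight strictly smaller.
-/

section Extrema

variable {ι : Type*} {S : Finset ι} (g : ι → ℤ)

lemma le_fmax {a : ι} (ha : a ∈ S) : g a ≤ fmax S g := by
  rw [fmax, dif_pos ⟨a, ha⟩]
  exact le_sup' g ha

lemma fmin_le {a : ι} (ha : a ∈ S) : fmin S g ≤ g a := by
  rw [fmin, dif_pos ⟨a, ha⟩]
  exact inf'_le g ha

lemma fmax_nonneg {g : ι → ℤ} (hg : ∀ a ∈ S, 0 ≤ g a) : 0 ≤ fmax S g := by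
  rcases S.eq_empty_or_nonempty with rfl | ⟨a, ha⟩
  · simp [fmax]
  · exact (hg a ha).trans (le_fmax g ha)

lemma fmax_empty : fmax (∅ : Finset ι) g = 0 := by
  simp [fmax]

lemma exists_mem_fmax_eq (hS : S.Nonempty) : ∃ a ∈ S, fmax S g = g a := by
  rw [fmax, dif_pos hS]
  exact exists_mem_eq_sup' hS g

end Extrema

section Dominance

variable {n : ℕ}

lemma Dominates.erase {D T : Finset (Fin n)} {x : Fin n} (hdom : Dominates D T) (hxT : x ∈ T) :
    Dominates (D.erase x) (T.erase x) := by
  obtain ⟨f, hinj, hf⟩ := hdom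
  -- the element sent to `x`, if any, is rerouted to `f x`, which is no larger
  refine ⟨fun w => if f w = x then f x else f w, ?_, ?_⟩
  · intro w₁ hw₁ w₂ hw₂ heq
    simp only [coe_erase, Set.mem_sdiff, mem_coe, Set.mem_singleton_iff] at hw₁ hw₂
    dsimp only at heq
    split_ifs at heq with h₁ h₂ h₂
    · exact hinj hw₁.1 hw₂.1 (h₁.trans h₂.symm)
    · exact absurd (hinj hxT hw₂.1 heq).symm hw₂.2
    · exact absurd (hinj hw₁.1 hxT heq) hw₁.2
    · exact hinj hw₁.1 hw₂.1 heq
  · intro w hw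
    obtain ⟨hwx, hwT⟩ := mem_erase.1 hw
    dsimp only
    split_ifs with hfw
    · refine ⟨mem_erase.2 ⟨fun hfx => hwx (hinj hwT hxT (hfw.trans hfx.symm)), (hf x hxT).1⟩, ?_⟩
      exact (hf x hxT).2.trans (hfw ▸ (hf w hwT).2)
    · exact ⟨mem_erase.2 ⟨hfw, (hf w hwT).1⟩, (hf w hwT).2⟩

lemma Dominates.sdiff {D T : Finset (Fin n)} (hdom : Dominates D T) :
    Dominates (D \ T) (T \ D) := by
  suffices key : ∀ U ⊆ T, Dominates (D \ U) (T \ U) by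
    simpa only [sdiff_inter_self_left, sdiff_inter_self_right] using key (T ∩ D) inter_subset_left
  intro U
  induction U using Finset.induction_on with
  | empty => simpa using hdom
  | insert x U hxU ih =>
    intro hU
    rw [sdiff_insert, sdiff_insert]
    exact (ih ((subset_insert x U).trans hU)).erase (mem_sdiff.2 ⟨hU (mem_insert_self x U), hxU⟩)

lemma Dominates.sum_le {S T : Finset (Fin n)} {w : Fin n → ℕ} (hw : Antitone w)
    (hdom : Dominates S T) : ∑ i ∈ T, w i ≤ ∑ i ∈ S, w i := by
  obtain ⟨f, hinj, hf⟩ := hdom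
  calc ∑ i ∈ T, w i ≤ ∑ i ∈ T, w (f i) := sum_le_sum fun i hi => hw (hf i hi).2
    _ = ∑ i ∈ T.image f, w i := (sum_image hinj).symm
    _ ≤ ∑ i ∈ S, w i := sum_le_sum_of_subset (image_subset_iff.2 fun i hi => (hf i hi).1)

lemma Dominates.sum_lt {D T : Finset (Fin n)} {α : Fin n → ℤ} (hdom : Dominates D T)
    (hne : T ≠ D) (hpos : ∀ d ∈ D, 0 < α d)
    (hlt : ∀ i ∈ T \ D, ∀ d ∈ D \ T, d < i → α i < α d) :
    ∑ i ∈ T, α i < ∑ i ∈ D, α i := by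
  rw [← sum_inter_add_sum_sdiff T D, ← sum_inter_add_sum_sdiff D T, inter_comm D T]
  refine add_lt_add_right ?_ _
  have hpos' : ∀ d ∈ D \ T, 0 < α d := fun d hd => hpos d (mem_sdiff.1 hd).1
  rcases (T \ D).eq_empty_or_nonempty with hTD | hTD
  · have hDT : (D \ T).Nonempty := sdiff_nonempty.2 fun hDT =>
      hne (subset_antisymm (sdiff_eq_empty_iff_subset.1 hTD) hDT)
    rw [hTD, sum_empty]
    exact sum_pos hpos' hDT
  · obtain ⟨g, hinj, hg⟩ := hdom.sdiff
    have hg_lt : ∀ i ∈ T \ D, g i < i := fun i hi =>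
      lt_of_le_of_ne (hg i hi).2 fun h => (mem_sdiff.1 hi).2 (h ▸ (mem_sdiff.1 (hg i hi).1).1)
    calc ∑ i ∈ T \ D, α i < ∑ i ∈ T \ D, α (g i) :=
          sum_lt_sum_of_nonempty hTD fun i hi => hlt i hi (g i) (hg i hi).1 (hg_lt i hi)
      _ = ∑ i ∈ (T \ D).image g, α i := (sum_image hinj).symm
      _ ≤ ∑ i ∈ D \ T, α i := sum_le_sum_of_subset_of_nonneg
          (image_subset_iff.2 fun i hi => (hg i hi).1) fun d hd _ => (hpos' d hd).le

end Dominance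

section Covers

variable {m n : ℕ} {A : Fin m → Fin n → ℕ} {b : Fin m → ℕ}

lemma IsCover.mono {S S' : Finset (Fin n)} (h : IsCover A b S) (hSS' : S ⊆ S') :
    IsCover A b S' := by
  obtain ⟨j, hj⟩ := h
  exact ⟨j, hj.trans_le (sum_le_sum_of_subset hSS')⟩

lemma not_isCover_insert_erase (hA : ColsOrdered A) {S : Finset (Fin n)} (hS : ¬IsCover A b S)
    {i j : Fin n} (hi : i ∈ S) (hij : i ≤ j) : ¬IsCover A b (insert j (S.erase i)) := by
  by_cases hjS : j ∈ S
  · exact fun h => hS (h.mono (insert_subset hjS (erase_subset i S)))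
  rintro ⟨r, hr⟩
  refine hS ⟨r, hr.trans_le ?_⟩
  rw [sum_insert fun h => hjS (mem_of_mem_erase h), ← add_sum_erase S _ hi]
  exact add_le_add_left (hA r i j hij) _

lemma secondMin_le {α : Fin n → ℤ} {D : Finset (Fin n)} {j j' : Fin n}
    (hj : j ∈ D) (hj' : j' ∈ D) (hne : j' ≠ j) (hle : α j' ≤ α j) :
    secondMin α D ≤ α j := by
  rw [secondMin, fmax, dif_pos ⟨j, hj⟩]
  refine sup'_le _ _ fun j'' _ => ?_
  by_cases h : j'' = j
  · subst h
    exact (fmin_le α (mem_erase.2 ⟨hne, hj'⟩)).trans hle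
  · exact fmin_le α (mem_erase.2 ⟨Ne.symm h, hj⟩)

/-- `D \ S` has at least two elements, since exchanging `i` for any one of them keeps `S`
feasible while `D` is a cover. -/
lemma exists_secondMin_le_of_isCover (hA : ColsOrdered A) (α : Fin n → ℤ)
    {D S : Finset (Fin n)} (hD : IsCover A b D) (hS : ¬IsCover A b S) {i : Fin n} (hi : i ∈ S)
    (hiD : ∀ j ∈ D, i < j) :
    ∃ j ∈ D \ S, secondMin α D ≤ α j ∧ ¬IsCover A b (insert j (S.erase i)) := by
  have hswap : ∀ j ∈ D, ¬IsCover A b (insert j (S.erase i)) := fun j hj =>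
    not_isCover_insert_erase hA hS hi (hiD j hj).le
  obtain ⟨j₁, hj₁⟩ : (D \ S).Nonempty := sdiff_nonempty.2 fun hDS => hS (hD.mono hDS)
  obtain ⟨j₂, hj₂, hne⟩ : ∃ j₂ ∈ D \ S, j₂ ≠ j₁ := by
    by_contra! hD₁
    refine hswap j₁ (mem_sdiff.1 hj₁).1 (hD.mono fun j hj => ?_)
    by_cases hjS : j ∈ S
    · exact mem_insert_of_mem (mem_erase.2 ⟨(hiD j hj).ne', hjS⟩)
    · rw [hD₁ j (mem_sdiff.2 ⟨hj, hjS⟩)]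
      exact mem_insert_self j₁ _
  rcases le_total (α j₂) (α j₁) with hle | hle
  · exact ⟨j₁, hj₁, secondMin_le (mem_sdiff.1 hj₁).1 (mem_sdiff.1 hj₂).1 hne hle,
      hswap j₁ (mem_sdiff.1 hj₁).1⟩
  · exact ⟨j₂, hj₂, secondMin_le (mem_sdiff.1 hj₂).1 (mem_sdiff.1 hj₁).1 hne.symm hle,
      hswap j₂ (mem_sdiff.1 hj₂).1⟩

end Covers

section MCI

variable {m n k : ℕ} {A : Fin m → Fin n → ℕ} {b : Fin m → ℕ} {C : Fin k → Finset (Fin n)}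
  {α : Fin n → ℤ}

lemma mem_unionC {i : Fin n} : i ∈ unionC C ↔ ∃ h, i ∈ C h := by
  simp [unionC]

lemma subset_unionC (h : Fin k) : C h ⊆ unionC C :=
  le_sup (mem_univ h)

lemma interC_subset (h : Fin k) : interC C ⊆ C h :=
  inf_le (mem_univ h)

lemma unionC_sdiff_subset (h : Fin k) : unionC C \ C h ⊆ unionC C \ interC C :=
  sdiff_subset_sdiff le_rfl (interC_subset h)

lemma IsMCICoeff.apply_lt_of_lt (hα : IsMCICoeff C α) {h : Fin k} {d i : Fin n} (hd : d ∈ C h)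
    (hd₀ : d ∉ interC C) (hi : i ∈ unionC C \ C h) (hdi : d < i) : α i < α d := by
  have hi₀ : i ∈ unionC C \ interC C := unionC_sdiff_subset h hi
  have hd_bound := hα.2.2.1 d (mem_sdiff.2 ⟨subset_unionC h hd, hd₀⟩) ⟨i, hi₀, hdi⟩ h hd
  linarith [le_fmax α (mem_filter.2 ⟨hi, hdi⟩)]

lemma IsMCICoeff.pos (hα : IsMCICoeff C α) {i : Fin n} (hi : i ∈ unionC C) : 0 < α i := by
  have hpos : ∀ i ∈ unionC C \ interC C, 0 < α i := by
    intro i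
    induction i using WellFoundedGT.induction with
    | _ i ih =>
      intro hi
      by_cases hmax : ∃ j ∈ unionC C \ interC C, i < j
      · obtain ⟨h, hih⟩ := mem_unionC.1 (mem_sdiff.1 hi).1
        have hi_bound := hα.2.2.1 i hi hmax h hih
        have : 0 ≤ fmax ((unionC C \ C h).filter (i < ·)) α := fmax_nonneg fun ℓ hℓ =>
          (ih ℓ (mem_filter.1 hℓ).2 (unionC_sdiff_subset h (mem_filter.1 hℓ).1)).le
        linarith
      · push Not at hmax
        rw [hα.2.1 i hi hmax]
        exact one_pos
  by_cases hi₀ : i ∈ interC C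
  · obtain ⟨h, hh⟩ := hα.2.2.2 i hi₀
    have : 0 ≤ ∑ ℓ ∈ (unionC C \ C h).filter (i < ·), α ℓ := sum_nonneg fun ℓ hℓ =>
      (hpos ℓ (unionC_sdiff_subset h (mem_filter.1 hℓ).1)).le
    linarith [le_max_right (fmax ((unionC C \ C h).filter (· < i)) α)
      (1 + ∑ ℓ ∈ (unionC C \ C h).filter (i < ·), α ℓ)]
  · exact hpos i (mem_sdiff.2 ⟨hi, hi₀⟩)

lemma exists_sum_lt_of_interC_subset (hA : ColsOrdered A) (hmc : MultiCover A b C)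
    (hα : IsMCICoeff C α) {W : Finset (Fin n)} (hWC : W ⊆ unionC C) (hCW : interC C ⊆ W)
    (hW : ¬IsCover A b W) : ∃ h, ∑ i ∈ W, α i < ∑ i ∈ C h, α i := by
  have hne : ∀ h, W \ interC C ≠ C h \ interC C := by
    intro h heq
    have hcov := hmc.1 h
    rw [← sdiff_union_of_subset (interC_subset (C := C) h), ← heq,
      sdiff_union_of_subset hCW] at hcov
    exact hW hcov
  obtain ⟨h, hdom | hdom⟩ := hmc.2 _ (sdiff_subset_sdiff hWC le_rfl) hne
  · obtain ⟨r, hr⟩ := hmc.1 h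
    refine absurd ⟨r, hr.trans_le ?_⟩ hW
    rw [← sum_sdiff (interC_subset h), ← sum_sdiff hCW]
    exact add_le_add_left (hdom.sum_le fun i i' => hA r i i') _
  · refine ⟨h, ?_⟩
    rw [← sum_sdiff (interC_subset h), ← sum_sdiff hCW]
    refine add_lt_add_left (hdom.sum_lt (hne h) (fun d hd => hα.pos ?_) ?_) _
    · exact subset_unionC h (mem_sdiff.1 hd).1
    intro i hi d hd hdi
    simp only [mem_sdiff] at hi hd
    obtain ⟨⟨hiW, hi₀⟩, hiD⟩ := hi
    obtain ⟨⟨hdh, hd₀⟩, -⟩ := hd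
    exact hα.apply_lt_of_lt hdh hd₀ (mem_sdiff.2 ⟨hWC hiW, fun hih => hiD ⟨hih, hi₀⟩⟩) hdi

lemma IsMCICoeff.sum_lt_of_forall_le (hα : IsMCICoeff C α) {W : Finset (Fin n)}
    (hWC : W ⊆ unionC C) {h : Fin k} {j : Fin n} (hj : j ∈ C h) (hjW : j ∉ W)
    (htail : 1 + ∑ ℓ ∈ (unionC C \ C h).filter (j < ·), α ℓ ≤ α j)
    (hW : ∀ ℓ ∈ W \ C h, j ≤ ℓ) : ∑ i ∈ W, α i < ∑ i ∈ C h, α i := by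
  have hnn : ∀ i ∈ unionC C, 0 ≤ α i := fun i hi => (hα.pos hi).le
  have hin : ∑ i ∈ W ∩ C h, α i ≤ ∑ i ∈ (C h).erase j, α i := by
    refine sum_le_sum_of_subset_of_nonneg (fun i hi => ?_) fun i hi _ =>
      hnn i (subset_unionC h (mem_of_mem_erase hi))
    obtain ⟨hiW, hih⟩ := mem_inter.1 hi
    exact mem_erase.2 ⟨fun e => hjW (e ▸ hiW), hih⟩
  have hout : ∑ i ∈ W \ C h, α i ≤ ∑ ℓ ∈ (unionC C \ C h).filter (j < ·), α ℓ := by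
    refine sum_le_sum_of_subset_of_nonneg (fun i hi => ?_) fun i hi _ =>
      hnn i (mem_sdiff.1 (mem_filter.1 hi).1).1
    refine mem_filter.2 ⟨sdiff_subset_sdiff hWC le_rfl hi, ?_⟩
    exact lt_of_le_of_ne (hW i hi) fun e => hjW (e ▸ (mem_sdiff.1 hi).1)
  rw [← sum_inter_add_sum_sdiff W (C h), ← add_sum_erase (C h) α hj]
  linarith

lemma exists_sum_lt_of_subset_unionC (hA : ColsOrdered A) (hmc : MultiCover A b C)
    (hα : IsMCICoeff C α) {W : Finset (Fin n)} (hWC : W ⊆ unionC C) (hW : ¬IsCover A b W) :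
    ∃ h, ∑ i ∈ W, α i < ∑ i ∈ C h, α i := by
  induction hU : interC C \ W using Finset.induction_on generalizing W with
  | empty =>
    exact exists_sum_lt_of_interC_subset hA hmc hα hWC (sdiff_eq_empty_iff_subset.1 hU) hW
  | insert j U hjU ih =>
    obtain ⟨hj₀, hjW⟩ := mem_sdiff.1 (hU ▸ mem_insert_self j U)
    obtain ⟨h, hh⟩ := hα.2.2.2 j hj₀
    rw [max_le_iff] at hh
    by_cases hswap : ∃ ℓ ∈ W \ C h, ℓ < j
    · obtain ⟨ℓ, hℓ, hℓj⟩ := hswap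
      obtain ⟨hℓW, hℓh⟩ := mem_sdiff.1 hℓ
      have hαℓ : α ℓ ≤ α j :=
        (le_fmax α (mem_filter.2 ⟨sdiff_subset_sdiff hWC le_rfl hℓ, hℓj⟩)).trans hh.1
      have hsub : insert j (W.erase ℓ) ⊆ unionC C :=
        insert_subset (subset_unionC h (interC_subset h hj₀)) ((erase_subset ℓ W).trans hWC)
      have hU' : interC C \ insert j (W.erase ℓ) = U := by
        have hℓ₀ : ℓ ∉ interC C := fun h₀ => hℓh (interC_subset h h₀)
        rw [sdiff_insert, ← erase_insert hjU, ← hU]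
        grind
      obtain ⟨h', hlt⟩ := ih hsub (not_isCover_insert_erase hA hW hℓW hℓj.le) hU'
      refine ⟨h', lt_of_le_of_lt ?_ hlt⟩
      rw [sum_insert fun h => hjW (mem_of_mem_erase h), ← add_sum_erase W α hℓW]
      exact add_le_add_left hαℓ _
    · push Not at hswap
      exact ⟨h, hα.sum_lt_of_forall_le hWC (interC_subset h hj₀) hjW hh.2 hswap⟩

end MCI

section ExtendedMCI

variable {m n k : ℕ} {A : Fin m → Fin n → ℕ} {b : Fin m → ℕ} {C : Fin k → Finset (Fin n)}
  {α : Fin n → ℤ} {ext : Fin n → ℤ}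

lemma exists_swap_of_notMem_unionC (hA : ColsOrdered A) (hmc : MultiCover A b C)
    (hα : IsMCICoeff C α)
    (hext : ∀ i, ext i =
      fmax (univ.filter fun h : Fin k => ∀ j ∈ C h, i < j) fun h => secondMin α (C h))
    {S : Finset (Fin n)} (hS : ¬IsCover A b S) {i : Fin n} (hiS : i ∈ S) (hiC : i ∉ unionC C) :
    ∃ S', ¬IsCover A b S' ∧ S' \ unionC C = (S \ unionC C).erase i ∧
      ∑ j ∈ S, α j + ext i ≤ ∑ j ∈ S', α j := by
  rcases (univ.filter fun h : Fin k => ∀ j ∈ C h, i < j).eq_empty_or_nonempty with hΦ | hΦ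
  · refine ⟨S.erase i, fun hcov => hS (hcov.mono (erase_subset i S)), erase_sdiff_comm S _ i, ?_⟩
    rw [hext i, hΦ, fmax_empty, ← add_sum_erase S α hiS, hα.1 i hiC]
    simp
  · obtain ⟨h, hh, hext_i⟩ := exists_mem_fmax_eq (fun h => secondMin α (C h)) hΦ
    obtain ⟨j, hj, hjα, hj_feas⟩ :=
      exists_secondMin_le_of_isCover hA α (hmc.1 h) hS hiS (mem_filter.1 hh).2
    obtain ⟨hjh, hjS⟩ := mem_sdiff.1 hj
    refine ⟨insert j (S.erase i), hj_feas, ?_, ?_⟩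
    · rw [insert_sdiff_of_mem _ (subset_unionC h hjh), erase_sdiff_comm]
    · rw [sum_insert fun h => hjS (mem_of_mem_erase h), ← add_sum_erase S α hiS, hα.1 i hiC,
        hext i, hext_i]
      linarith

lemma exists_sum_ext_add_sum_lt (hA : ColsOrdered A) (hmc : MultiCover A b C)
    (hα : IsMCICoeff C α)
    (hext : ∀ i, ext i =
      fmax (univ.filter fun h : Fin k => ∀ j ∈ C h, i < j) fun h => secondMin α (C h))
    {S : Finset (Fin n)} (hS : ¬IsCover A b S) :
    ∃ h, ∑ i ∈ S \ unionC C, ext i + ∑ i ∈ S, α i < ∑ i ∈ C h, α i := by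
  induction hU : S \ unionC C using Finset.induction_on generalizing S with
  | empty =>
    simpa using exists_sum_lt_of_subset_unionC hA hmc hα (sdiff_eq_empty_iff_subset.1 hU) hS
  | insert i U hiU ih =>
    obtain ⟨hiS, hiC⟩ := mem_sdiff.1 (hU ▸ mem_insert_self i U)
    obtain ⟨S', hS', hS'U, hle⟩ := exists_swap_of_notMem_unionC hA hmc hα hext hS hiS hiC
    obtain ⟨h, hlt⟩ := ih hS' (by rw [hS'U, hU, erase_insert hiU])
    refine ⟨h, ?_⟩
    rw [sum_insert hiU]
    linarith

end ExtendedMCI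

lemma sum_mul_eq_sum_filter {ι : Type*} {x : ι → ℤ} (hx : ∀ i, x i = 0 ∨ x i = 1)
    (s : Finset ι) (f : ι → ℤ) : ∑ i ∈ s, f i * x i = ∑ i ∈ s with x i = 1, f i := by
  rw [sum_filter]
  refine sum_congr rfl fun i _ => ?_
  rcases hx i with h | h <;> simp [h]

theorem emci_valid_general {m n k : ℕ}
    (A : Fin m → Fin n → ℕ) (b : Fin m → ℕ) (hA : ColsOrdered A)
    (C : Fin k → Finset (Fin n))
    (hmc : MultiCover A b C)
    (α : Fin n → ℤ) (hα : IsMCICoeff C α)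
    (β : ℤ) (hβ : β = fmax (Finset.univ : Finset (Fin k)) (fun h => ∑ i ∈ C h, α i) - 1)
    (ext : Fin n → ℤ)
    (hext : ∀ i, ext i =
      fmax (Finset.univ.filter (fun h : Fin k => ∀ j ∈ C h, i < j))
        (fun h => secondMin α (C h)))
    (x : Fin n → ℤ) (hx : ∀ i, x i = 0 ∨ x i = 1)
    (hfeas : ∀ j, ∑ i, (A j i : ℤ) * x i ≤ (b j : ℤ)) :
    (∑ i ∈ Finset.univ \ unionC C, ext i * x i) + ∑ i, α i * x i ≤ β := by
  set S := univ.filter fun i => x i = 1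
  have hS : ¬IsCover A b S := by
    rintro ⟨r, hr⟩
    have hr_feas := hfeas r
    rw [sum_mul_eq_sum_filter hx, ← Nat.cast_sum, Nat.cast_le] at hr_feas
    exact hr.not_ge hr_feas
  have hSC : (univ \ unionC C).filter (fun i => x i = 1) = S \ unionC C := by
    ext i
    simp only [S, mem_filter, mem_sdiff, mem_univ, true_and]
    tauto
  obtain ⟨h, hlt⟩ := exists_sum_ext_add_sum_lt hA hmc hα hext hS
  rw [hβ, sum_mul_eq_sum_filter hx, sum_mul_eq_sum_filter hx, hSC]
  linarith [le_fmax (fun h => ∑ i ∈ C h, α i) (mem_univ h)]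

/-- validity of the extended MCI for the TOMKS `K`. -/
theorem emci_valid {m n k : ℕ} (hk : 0 < k)
    (A : Fin m → Fin n → ℕ) (b : Fin m → ℕ) (hA : ColsOrdered A)
    (C : Fin k → Finset (Fin n)) (hcard : ∀ h, 2 ≤ (C h).card)
    (hmc : MultiCover A b C)
    (α : Fin n → ℤ) (hα : IsMCICoeff C α)
    (β : ℤ) (hβ : β = fmax (Finset.univ : Finset (Fin k)) (fun h => ∑ i ∈ C h, α i) - 1)
    (ext : Fin n → ℤ)
    (hext : ∀ i, ext i =
      fmax (Finset.univ.filter (fun h : Fin k => ∀ j ∈ C h, i < j))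
        (fun h => secondMin α (C h)))
    (x : Fin n → ℤ) (hx : ∀ i, x i = 0 ∨ x i = 1)
    (hfeas : ∀ j, ∑ i, (A j i : ℤ) * x i ≤ (b j : ℤ)) :
    (∑ i ∈ Finset.univ \ unionC C, ext i * x i) + ∑ i, α i * x i ≤ β :=
  emci_valid_general A b hA C hmc α hα β hβ ext hext x hx hfeas
end
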